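/- arXiv:2104.10844 — 2 statements merged into one kernel-verified Lean document; each statement's English description precedes it below -/
import Mathlib

section
/- Let n ≥ 1 be an integer. Suppose f:(0,∞)→ℝ is C¹ with G = ∫₀^∞ f'(y)² dy < ∞, F = ∫₀^∞ e^{-2y} f(y)² dy < ∞, and F ≤ C·G. Then there exists a constant C₁ (depending on n and C) with ∫₀^∞ e^{-y} f(y) dy ≤ C₁ F^{n/(2n+1)} G^{1/(4n+2)}. -/
open MeasureTheory Set

lemma amgm_le_sqrt {A P Q : ℝ} (hP : 0 ≤ P) (hQ : 0 ≤ Q)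
    (h : ∀ ε : ℝ, 0 < ε → A ≤ ε * P + Q / (4 * ε)) :
    A ≤ Real.sqrt P * Real.sqrt Q := by
  have hPQ : 0 ≤ Real.sqrt P * Real.sqrt Q := by positivity
  rcases eq_or_lt_of_le hP with hP0 | hP0
  · -- P = 0 : A ≤ Q/(4ε) for all ε, so A ≤ 0
    have hA : A ≤ 0 := by
      by_contra h'
      push_neg at h'
      have h1 := h (Q / (2 * A) + 1) (by positivity)
      rw [← hP0, mul_zero, zero_add] at h1
      have key : A * (4 * (Q / (2 * A) + 1)) = 2 * Q + 4 * A := by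
        field_simp
        ring
      have : Q / (4 * (Q / (2 * A) + 1)) < A := by
        rw [div_lt_iff₀ (by positivity)]
        rw [key]
        linarith
      linarith
    linarith
  · rcases eq_or_lt_of_le hQ with hQ0 | hQ0
    · have hA : A ≤ 0 := by
        by_contra h'
        push_neg at h'
        have h1 := h (A / (2 * P)) (by positivity)
        rw [← hQ0] at h1
        have : (0:ℝ) / (4 * (A / (2 * P))) = 0 := by simp
        rw [this] at h1
        have : A / (2 * P) * P = A / 2 := by field_simp
        rw [this] at h1
        linarith
      linarith
    · have hε : 0 < Real.sqrt Q / (2 * Real.sqrt P) := by positivity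
      have h1 := h _ hε
      have hsP : Real.sqrt P * Real.sqrt P = P := Real.mul_self_sqrt hP
      have hsQ : Real.sqrt Q * Real.sqrt Q = Q := Real.mul_self_sqrt hQ
      have hsPp : 0 < Real.sqrt P := Real.sqrt_pos.2 hP0
      have hsQp : 0 < Real.sqrt Q := Real.sqrt_pos.2 hQ0
      have e1 : Real.sqrt Q / (2 * Real.sqrt P) * P = Real.sqrt P * Real.sqrt Q / 2 := by
        field_simp
        nlinarith
      have e2 : Q / (4 * (Real.sqrt Q / (2 * Real.sqrt P))) = Real.sqrt P * Real.sqrt Q / 2 := by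
        field_simp
        nlinarith
      rw [e1, e2] at h1
      linarith

lemma integral_exp_neg_half_Ioi (T : ℝ) :
    ∫ y in Ioi T, Real.exp (-(y / 2)) = 2 * Real.exp (-(T / 2)) := by
  have hderiv : ∀ x ∈ Ici T, HasDerivAt (fun y => -2 * Real.exp (-(y / 2)))
      (Real.exp (-(x / 2))) x := by
    intro x _
    have h1 : HasDerivAt (fun y : ℝ => -(y / 2)) (-(1/2)) x := by
      simpa using ((hasDerivAt_id x).div_const 2).fun_neg
    have := (h1.exp).const_mul (-2 : ℝ)
    exact this.congr_deriv (by ring)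
  have hint : IntegrableOn (fun y => Real.exp (-(y / 2))) (Ioi T) := by
    have := exp_neg_integrableOn_Ioi T (by norm_num : (0:ℝ) < 1/2)
    simpa [div_eq_mul_inv, mul_comm] using this
  have htend : Filter.Tendsto (fun y => -2 * Real.exp (-(y / 2))) Filter.atTop (nhds 0) := by
    have : Filter.Tendsto (fun y : ℝ => -(y / 2)) Filter.atTop Filter.atBot :=
      Filter.tendsto_neg_atTop_atBot.comp
        (Filter.tendsto_id.atTop_div_const (by norm_num))
    have := (Real.tendsto_exp_atBot.comp this).const_mul (-2 : ℝ)
    simpa using this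
  have := integral_Ioi_of_hasDerivAt_of_tendsto' hderiv hint htend
  rw [this]
  ring

lemma ftc_diff_le {f : ℝ → ℝ} (hf : ContDiffOn ℝ 1 f (Ioi 0))
    (hG : IntegrableOn (fun y => (deriv f y) ^ 2) (Ioi 0))
    {a b : ℝ} (ha : 0 < a) (hab : a ≤ b) :
    |f b - f a| ≤ Real.sqrt (∫ y in Ioi (0:ℝ), (deriv f y) ^ 2) * Real.sqrt (b - a) := by
  have hGnn : (0:ℝ) ≤ ∫ y in Ioi (0:ℝ), (deriv f y) ^ 2 :=
    setIntegral_nonneg measurableSet_Ioi (fun x _ => sq_nonneg _)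
  apply amgm_le_sqrt hGnn (by linarith)
  intro ε hε
  have hsub : uIcc a b ⊆ Ioi 0 := by
    rw [uIcc_of_le hab]
    exact fun x hx => lt_of_lt_of_le ha hx.1
  have hdiff : ∀ x ∈ uIcc a b, HasDerivAt f (deriv f x) x := fun x hx =>
    ((hf.contDiffAt (isOpen_Ioi.mem_nhds (hsub hx))).differentiableAt one_ne_zero).hasDerivAt
  have hcont : ContinuousOn (deriv f) (Ioi 0) :=
    hf.continuousOn_deriv_of_isOpen isOpen_Ioi le_rfl
  have hii : IntervalIntegrable (deriv f) volume a b :=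
    (hcont.mono hsub).intervalIntegrable
  have hftc : ∫ x in a..b, deriv f x = f b - f a :=
    intervalIntegral.integral_eq_sub_of_hasDerivAt hdiff hii
  rw [← hftc]
  have hii2 : IntervalIntegrable (fun x => ε * (deriv f x) ^ 2 + 1 / (4 * ε)) volume a b :=
    ((continuousOn_const.mul ((hcont.mono hsub).pow 2)).add continuousOn_const).intervalIntegrable
  calc |∫ x in a..b, deriv f x| ≤ ∫ x in a..b, |deriv f x| :=
        intervalIntegral.abs_integral_le_integral_abs hab
    _ ≤ ∫ x in a..b, (ε * (deriv f x) ^ 2 + 1 / (4 * ε)) := by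
        apply intervalIntegral.integral_mono_on hab hii.abs hii2
        intro x _
        have h1 : 4 * ε * (1 / (4 * ε)) = 1 := by field_simp
        nlinarith [sq_nonneg (2 * ε * |deriv f x| - 1), sq_abs (deriv f x), abs_nonneg (deriv f x), hε, h1, mul_pos hε hε]
    _ = ε * (∫ x in a..b, (deriv f x) ^ 2) + (b - a) * (1 / (4 * ε)) := by
        rw [intervalIntegral.integral_add (show IntervalIntegrable (fun x => ε * deriv f x ^ 2) volume a b from ((hcont.mono hsub).pow 2).intervalIntegrable.const_mul ε)
          intervalIntegrable_const, intervalIntegral.integral_const_mul,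
          intervalIntegral.integral_const]
        simp [smul_eq_mul]
    _ ≤ ε * (∫ y in Ioi (0:ℝ), (deriv f y) ^ 2) + (b - a) / (4 * ε) := by
        have hmono : ∫ x in a..b, (deriv f x) ^ 2 ≤ ∫ y in Ioi (0:ℝ), (deriv f y) ^ 2 := by
          rw [intervalIntegral.integral_of_le hab]
          apply setIntegral_mono_set hG
          · exact Filter.Eventually.of_forall (fun x => sq_nonneg _)
          · exact HasSubset.Subset.eventuallyLE (fun x hx => lt_of_lt_of_le ha hx.1.le)
        have := mul_le_mul_of_nonneg_left hmono hε.le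
        rw [mul_one_div] at *
        linarith

lemma integrableOn_exp_neg_half (T : ℝ) :
    IntegrableOn (fun y => Real.exp (-(y / 2))) (Ioi T) := by
  have := exp_neg_integrableOn_Ioi T (by norm_num : (0:ℝ) < 1/2)
  simpa [div_eq_mul_inv, mul_comm] using this

lemma sqrt_exp_eq (t : ℝ) : Real.sqrt (Real.exp t) = Real.exp (t / 2) := by
  rw [show Real.exp t = (Real.exp (t / 2)) ^ 2 by rw [sq, ← Real.exp_add]; ring_nf]
  exact Real.sqrt_sq (Real.exp_pos _).le

set_option maxHeartbeats 1000000 in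
/-- Hardy-type inequality on `(0,∞)`, case `k = 1`. -/
theorem stmt_2 (n : ℕ) (hn : 1 ≤ n) (C : ℝ) (hC : 0 < C) :
    ∃ C₁ > 0, ∀ f : ℝ → ℝ,
      ContDiffOn ℝ 1 f (Ioi 0) →
      IntegrableOn (fun y => (deriv f y) ^ 2) (Ioi 0) →
      IntegrableOn (fun y => Real.exp (-2 * y) * (f y) ^ 2) (Ioi 0) →
      (∫ y in Ioi (0:ℝ), Real.exp (-2 * y) * (f y) ^ 2) ≤
        C * ∫ y in Ioi (0:ℝ), (deriv f y) ^ 2 →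
      (∫ y in Ioi (0:ℝ), Real.exp (-y) * f y) ≤
        C₁ * (∫ y in Ioi (0:ℝ), Real.exp (-2 * y) * (f y) ^ 2) ^ ((n : ℝ) / (2 * n + 1)) *
          (∫ y in Ioi (0:ℝ), (deriv f y) ^ 2) ^ ((1 : ℝ) / (4 * n + 2)) := by
  set δ : ℝ := 1 / (4 * n + 2) with hδdef
  have hδpos : 0 < δ := by positivity
  set K : ℝ := C ^ (2 * δ) + (1 + C) ^ (2 * δ) / (2 * δ) with hKdef
  have hKpos : 0 < K := by positivity
  refine ⟨Real.sqrt K + 8 * C ^ δ, by positivity, ?_⟩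
  intro f hf hG hF hFG
  set G : ℝ := ∫ y in Ioi (0:ℝ), (deriv f y) ^ 2 with hGdef
  set F : ℝ := ∫ y in Ioi (0:ℝ), Real.exp (-2 * y) * (f y) ^ 2 with hFdef
  have hF0 : 0 ≤ F := setIntegral_nonneg measurableSet_Ioi (fun x _ => by positivity)
  have hG0 : 0 ≤ G := setIntegral_nonneg measurableSet_Ioi (fun x _ => sq_nonneg _)
  clear_value F G
  rcases eq_or_lt_of_le hF0 with hFzero | hFp
  · -- F = 0 : f vanishes a.e.
    have hae : (fun y => Real.exp (-2 * y) * f y ^ 2) =ᵐ[volume.restrict (Ioi 0)] 0 := by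
      refine (integral_eq_zero_iff_of_nonneg_ae ?_ hF).mp (hFdef ▸ hFzero.symm)
      exact Filter.Eventually.of_forall fun y => by positivity
    have hfae : (fun y => Real.exp (-y) * f y) =ᵐ[volume.restrict (Ioi 0)] 0 := by
      filter_upwards [hae] with y hy
      have : f y = 0 := by
        by_contra hne
        have := Real.exp_pos (-2 * y)
        have : Real.exp (-2 * y) * f y ^ 2 > 0 := by positivity
        simp only [Pi.zero_apply] at hy
        linarith
      simp [this]
    rw [integral_congr_ae hfae]
    simp only [Pi.zero_apply, integral_zero]
    have he1 : ((n : ℝ) / (2 * n + 1)) ≠ 0 := by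
      have : (0:ℝ) < n := by exact_mod_cast hn
      positivity
    rw [← hFzero, Real.zero_rpow he1, mul_zero, zero_mul]
  · -- main case F > 0
    have hGp : 0 < G := by nlinarith
    -- pick a good point s ∈ (0,1]
    have hs : ∃ s ∈ Ioc (0:ℝ) 1, Real.exp (-2 * s) * f s ^ 2 ≤ 2 * F := by
      by_contra hcon
      push_neg at hcon
      have h1 : ∫ _ in Ioc (0:ℝ) 1, (2 * F) ≤
          ∫ y in Ioc (0:ℝ) 1, Real.exp (-2 * y) * f y ^ 2 := by
        refine setIntegral_mono_on (integrableOn_const ?_)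
          (hF.mono_set Ioc_subset_Ioi_self) measurableSet_Ioc (fun x hx => (hcon x hx).le)
        rw [Real.volume_Ioc]
        exact ENNReal.ofReal_ne_top
      have h2 : ∫ y in Ioc (0:ℝ) 1, Real.exp (-2 * y) * f y ^ 2 ≤ F := by
        rw [hFdef]
        apply setIntegral_mono_set hF
        · exact Filter.Eventually.of_forall (fun y => by positivity)
        · exact HasSubset.Subset.eventuallyLE Ioc_subset_Ioi_self
      rw [setIntegral_const, Real.volume_real_Ioc_of_le zero_le_one] at h1
      simp only [sub_zero, ENNReal.toReal_ofReal zero_le_one, smul_eq_mul, one_mul] at h1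
      linarith
    obtain ⟨s, hsmem, hsle⟩ := hs
    -- bound |f s|
    have hfs2 : f s ^ 2 ≤ 2 * Real.exp 2 * F := by
      have h1 : Real.exp (2 * s) * Real.exp (-2 * s) = 1 := by
        rw [← Real.exp_add]; ring_nf; exact Real.exp_zero
      have h2 : Real.exp (2 * s) ≤ Real.exp 2 := Real.exp_le_exp.2 (by nlinarith [hsmem.2])
      have h3 := mul_le_mul_of_nonneg_left hsle (Real.exp_pos (2 * s)).le
      rw [← mul_assoc, h1, one_mul] at h3
      nlinarith [Real.exp_pos (2 * s)]
    set a : ℝ := Real.sqrt (2 * Real.exp 2 * F) with hadef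
    have hfs_abs : |f s| ≤ a := by
      rw [← Real.sqrt_sq_eq_abs]
      exact Real.sqrt_le_sqrt hfs2
    have ha0 : 0 ≤ a := Real.sqrt_nonneg _
    -- pointwise bound on |f|
    have hptw : ∀ y ∈ Ioi (0:ℝ), |f y| ≤
        a + Real.sqrt G * (Real.sqrt (Real.exp 1) * Real.exp (y / 2)) := by
      intro y hy
      have hy0 : (0:ℝ) < y := hy
      have hdd : |f y - f s| ≤ Real.sqrt G * Real.sqrt (y + 1) := by
        rw [hGdef]
        rcases le_total s y with h | h
        · have h1 := ftc_diff_le hf hG hsmem.1 h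
          refine h1.trans (mul_le_mul_of_nonneg_left ?_ (Real.sqrt_nonneg _))
          exact Real.sqrt_le_sqrt (by nlinarith [hsmem.1])
        · have h1 := ftc_diff_le hf hG hy0 h
          rw [abs_sub_comm]
          refine h1.trans (mul_le_mul_of_nonneg_left ?_ (Real.sqrt_nonneg _))
          exact Real.sqrt_le_sqrt (by nlinarith [hsmem.2])
      have hsq : Real.sqrt (y + 1) ≤ Real.sqrt (Real.exp 1) * Real.exp (y / 2) := by
        have h1 : Real.sqrt (y + 1) ≤ Real.exp (y / 2) := by
          rw [← sqrt_exp_eq]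
          exact Real.sqrt_le_sqrt (Real.add_one_le_exp y)
        have h2 : 1 ≤ Real.sqrt (Real.exp 1) := by
          rw [sqrt_exp_eq]
          nlinarith [Real.add_one_le_exp ((1:ℝ)/2)]
        nlinarith [Real.exp_pos (y / 2)]
      calc |f y| = |f s + (f y - f s)| := by ring_nf
        _ ≤ |f s| + |f y - f s| := abs_add_le _ _
        _ ≤ a + Real.sqrt G * Real.sqrt (y + 1) := add_le_add hfs_abs hdd
        _ ≤ a + Real.sqrt G * (Real.sqrt (Real.exp 1) * Real.exp (y / 2)) := by
            exact add_le_add_right (mul_le_mul_of_nonneg_left hsq (Real.sqrt_nonneg _)) _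
    -- integrability of the integrand
    have hmeas : AEStronglyMeasurable (fun y => Real.exp (-y) * f y)
        (volume.restrict (Ioi 0)) :=
      (((Real.continuous_exp.comp continuous_neg).continuousOn).mul
        hf.continuousOn).aestronglyMeasurable measurableSet_Ioi
    have hexp1_int : IntegrableOn (fun y : ℝ => Real.exp (-y)) (Ioi (0:ℝ)) := by
      have := exp_neg_integrableOn_Ioi (0:ℝ) one_pos
      simpa using this
    have hbound_int : IntegrableOn (fun y => a * Real.exp (-y) +
        (Real.sqrt (Real.exp 1) * Real.sqrt G) * Real.exp (-(y / 2))) (Ioi (0:ℝ)) :=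
      (hexp1_int.const_mul a).add ((integrableOn_exp_neg_half 0).const_mul _)
    have hint : IntegrableOn (fun y => Real.exp (-y) * f y) (Ioi (0:ℝ)) := by
      apply Integrable.mono' hbound_int hmeas
      rw [ae_restrict_iff' measurableSet_Ioi]
      apply Filter.Eventually.of_forall
      intro y hy
      have h1 := hptw y hy
      have h2 : Real.exp (-y) * Real.exp (y / 2) = Real.exp (-(y / 2)) := by
        rw [← Real.exp_add]; ring_nf
      have h3 : ‖Real.exp (-y) * f y‖ = Real.exp (-y) * |f y| := by
        rw [norm_mul, Real.norm_eq_abs, Real.norm_eq_abs, abs_of_pos (Real.exp_pos _)]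
      rw [h3]
      calc Real.exp (-y) * |f y| ≤ Real.exp (-y) *
            (a + Real.sqrt G * (Real.sqrt (Real.exp 1) * Real.exp (y / 2))) :=
            mul_le_mul_of_nonneg_left h1 (Real.exp_pos _).le
        _ = a * Real.exp (-y) + (Real.sqrt (Real.exp 1) * Real.sqrt G) *
            (Real.exp (-y) * Real.exp (y / 2)) := by ring
        _ = _ := by rw [h2]
    -- split the integral at T
    set T : ℝ := 1 + Real.log (1 + G / F) with hTdef
    have hT1 : 1 ≤ T :=
      le_add_of_nonneg_right (Real.log_nonneg (by linarith [div_nonneg hG0 hF0]))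
    have hTpos : 0 < T := lt_of_lt_of_le one_pos hT1
    clear_value T
    have hsplit : ∫ y in Ioi (0:ℝ), Real.exp (-y) * f y =
        (∫ y in Ioc (0:ℝ) T, Real.exp (-y) * f y) + ∫ y in Ioi T, Real.exp (-y) * f y := by
      rw [← setIntegral_union (Ioc_disjoint_Ioi le_rfl) measurableSet_Ioi
        (hint.mono_set Ioc_subset_Ioi_self) (hint.mono_set (Ioi_subset_Ioi hTpos.le)),
        Ioc_union_Ioi_eq_Ioi hTpos.le]
    -- head estimate
    have hsF : 0 < Real.sqrt F := Real.sqrt_pos.2 hFp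
    have hsT : 0 < Real.sqrt T := Real.sqrt_pos.2 hTpos
    set ε : ℝ := Real.sqrt T / (2 * Real.sqrt F) with hεdef
    have hεpos : 0 < ε := by positivity
    clear_value ε
    have hhead : ∫ y in Ioc (0:ℝ) T, Real.exp (-y) * f y ≤ Real.sqrt T * Real.sqrt F := by
      have hle : ∀ y ∈ Ioc (0:ℝ) T, Real.exp (-y) * f y ≤
          ε * (Real.exp (-2 * y) * f y ^ 2) + 1 / (4 * ε) := by
        intro y _
        have he : Real.exp (-2 * y) = Real.exp (-y) ^ 2 := by
          rw [sq, ← Real.exp_add]; ring_nf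
        have h1 : 4 * ε * (1 / (4 * ε)) = 1 := by field_simp
        rw [he]
        nlinarith [sq_nonneg (2 * ε * (Real.exp (-y) * f y) - 1), hεpos, h1]
      have hmono := setIntegral_mono_on (hint.mono_set Ioc_subset_Ioi_self)
        (((hF.mono_set Ioc_subset_Ioi_self).const_mul ε).add
          (integrableOn_const (by rw [Real.volume_Ioc]; exact ENNReal.ofReal_ne_top)))
        measurableSet_Ioc hle
      have heq : ∫ y in Ioc (0:ℝ) T, (ε * (Real.exp (-2 * y) * f y ^ 2) + 1 / (4 * ε)) =
          ε * (∫ y in Ioc (0:ℝ) T, Real.exp (-2 * y) * f y ^ 2) + T * (1 / (4 * ε)) := by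
        rw [integral_add ((hF.mono_set Ioc_subset_Ioi_self).const_mul ε)
          (integrableOn_const (by rw [Real.volume_Ioc]; exact ENNReal.ofReal_ne_top)),
          integral_const_mul, setIntegral_const, Real.volume_real_Ioc_of_le hTpos.le, smul_eq_mul,
          sub_zero]
      have hFle : ∫ y in Ioc (0:ℝ) T, Real.exp (-2 * y) * f y ^ 2 ≤ F := by
        rw [hFdef]
        apply setIntegral_mono_set hF
        · exact Filter.Eventually.of_forall (fun y => by positivity)
        · exact HasSubset.Subset.eventuallyLE Ioc_subset_Ioi_self
      have e1 : ε * F = Real.sqrt T * Real.sqrt F / 2 := by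
        rw [hεdef]
        field_simp
        linear_combination (-1 : ℝ) * (Real.sq_sqrt hF0)
      have e2 : T * (1 / (4 * ε)) = Real.sqrt T * Real.sqrt F / 2 := by
        rw [hεdef]
        field_simp
        linear_combination (-4 : ℝ) * (Real.sq_sqrt hTpos.le)
      calc ∫ y in Ioc (0:ℝ) T, Real.exp (-y) * f y ≤
            ε * (∫ y in Ioc (0:ℝ) T, Real.exp (-2 * y) * f y ^ 2) + T * (1 / (4 * ε)) := by
            rw [← heq]; exact hmono
        _ ≤ ε * F + T * (1 / (4 * ε)) := by
            have := mul_le_mul_of_nonneg_left hFle hεpos.le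
            linarith
        _ = Real.sqrt T * Real.sqrt F := by rw [e1, e2]; ring
    -- tail estimate
    have htail : ∫ y in Ioi T, Real.exp (-y) * f y ≤
        a * Real.exp (-T) + (Real.sqrt (Real.exp 1) * Real.sqrt G) * (2 * Real.exp (-(T / 2))) := by
      have hle : ∀ y ∈ Ioi T, Real.exp (-y) * f y ≤
          a * Real.exp (-y) + (Real.sqrt (Real.exp 1) * Real.sqrt G) * Real.exp (-(y / 2)) := by
        intro y hy
        have hy0 : y ∈ Ioi (0:ℝ) := lt_trans hTpos hy
        have h1 := hptw y hy0
        have h2 : Real.exp (-y) * Real.exp (y / 2) = Real.exp (-(y / 2)) := by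
          rw [← Real.exp_add]; ring_nf
        have h3 : Real.exp (-y) * f y ≤ Real.exp (-y) * |f y| :=
          mul_le_mul_of_nonneg_left (le_abs_self _) (Real.exp_pos _).le
        calc Real.exp (-y) * f y ≤ Real.exp (-y) *
              (a + Real.sqrt G * (Real.sqrt (Real.exp 1) * Real.exp (y / 2))) :=
              h3.trans (mul_le_mul_of_nonneg_left h1 (Real.exp_pos _).le)
          _ = a * Real.exp (-y) + (Real.sqrt (Real.exp 1) * Real.sqrt G) *
              (Real.exp (-y) * Real.exp (y / 2)) := by ring
          _ = _ := by rw [h2]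
      have hmono := setIntegral_mono_on (hint.mono_set (Ioi_subset_Ioi hTpos.le))
        (((hexp1_int.mono_set (Ioi_subset_Ioi hTpos.le)).const_mul a).add
          ((integrableOn_exp_neg_half T).const_mul _)) measurableSet_Ioi hle
      have heq : ∫ y in Ioi T, (a * Real.exp (-y) +
          (Real.sqrt (Real.exp 1) * Real.sqrt G) * Real.exp (-(y / 2))) =
          a * Real.exp (-T) + (Real.sqrt (Real.exp 1) * Real.sqrt G) * (2 * Real.exp (-(T / 2))) := by
        rw [integral_add ((hexp1_int.mono_set (Ioi_subset_Ioi hTpos.le)).const_mul a)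
          ((integrableOn_exp_neg_half T).const_mul _), integral_const_mul, integral_const_mul,
          integral_exp_neg_Ioi, integral_exp_neg_half_Ioi]
      exact hmono.trans (le_of_eq heq)
    -- numeric bounds
    have hexp1lt : Real.exp 1 < 2.7182818286 := Real.exp_one_lt_d9
    have hsqe : Real.sqrt (Real.exp 1) ≤ 2 := by
      rw [show (2:ℝ) = Real.sqrt 4 by
        rw [show (4:ℝ) = 2 ^ 2 by norm_num, Real.sqrt_sq (by norm_num)]]
      exact Real.sqrt_le_sqrt (by nlinarith)
    have ha4 : a ≤ 4 * Real.sqrt F := by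
      rw [hadef, Real.sqrt_mul (by positivity) F]
      have : Real.sqrt (2 * Real.exp 2) ≤ 4 := by
        rw [show (4:ℝ) = Real.sqrt 16 by
          rw [show (16:ℝ) = 4 ^ 2 by norm_num, Real.sqrt_sq (by norm_num)]]
        apply Real.sqrt_le_sqrt
        have : Real.exp 2 = Real.exp 1 * Real.exp 1 := by rw [← Real.exp_add]; norm_num
        nlinarith [Real.exp_pos 1]
      exact mul_le_mul_of_nonneg_right this (Real.sqrt_nonneg _)
    have hexpT_le : Real.exp (-T) ≤ F / G := by
      rw [hTdef, show -(1 + Real.log (1 + G / F)) = -1 + -Real.log (1 + G / F) by ring,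
        Real.exp_add, Real.exp_neg (Real.log _), Real.exp_log (by positivity)]
      have h1 : (1 + G / F)⁻¹ ≤ (G / F)⁻¹ := by
        apply inv_anti₀ (by positivity)
        linarith
      have h2 : (G / F)⁻¹ = F / G := by rw [inv_div]
      have h3 : Real.exp (-1) ≤ 1 := Real.exp_le_one_iff.2 (by norm_num)
      calc Real.exp (-1) * (1 + G / F)⁻¹ ≤ 1 * (G / F)⁻¹ := by
            apply mul_le_mul h3 h1 (by positivity) (by norm_num)
        _ = F / G := by rw [one_mul, h2]
    have hexpT1 : Real.exp (-T) ≤ 1 := Real.exp_le_one_iff.2 (by linarith)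
    have hGT : Real.sqrt G * Real.exp (-(T / 2)) ≤ Real.sqrt F := by
      have h1 : Real.sqrt G * Real.exp (-(T / 2)) = Real.sqrt (G * Real.exp (-T)) := by
        rw [Real.sqrt_mul hG0, show -T = -(T/2) * 2 by ring]
        congr 1
        rw [show -(T/2) * 2 = (-(T/2)) + (-(T/2)) by ring, Real.exp_add]
        rw [show Real.exp (-(T/2)) * Real.exp (-(T/2)) = Real.exp (-(T/2)) ^ 2 by ring,
          Real.sqrt_sq (Real.exp_pos _).le]
      rw [h1]
      apply Real.sqrt_le_sqrt
      calc G * Real.exp (-T) ≤ G * (F / G) :=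
            mul_le_mul_of_nonneg_left hexpT_le hG0
        _ = F := by field_simp
    -- combine
    have hLHS : ∫ y in Ioi (0:ℝ), Real.exp (-y) * f y ≤
        Real.sqrt T * Real.sqrt F + 8 * Real.sqrt F := by
      rw [hsplit]
      have h1 : a * Real.exp (-T) ≤ 4 * Real.sqrt F := by
        calc a * Real.exp (-T) ≤ a * 1 := mul_le_mul_of_nonneg_left hexpT1 ha0
          _ = a := mul_one a
          _ ≤ 4 * Real.sqrt F := ha4
      have h2 : (Real.sqrt (Real.exp 1) * Real.sqrt G) * (2 * Real.exp (-(T / 2))) ≤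
          4 * Real.sqrt F := by
        calc (Real.sqrt (Real.exp 1) * Real.sqrt G) * (2 * Real.exp (-(T / 2)))
            = 2 * Real.sqrt (Real.exp 1) * (Real.sqrt G * Real.exp (-(T / 2))) := by ring
          _ ≤ 2 * 2 * Real.sqrt F := by
              apply mul_le_mul (by nlinarith [Real.sqrt_nonneg (Real.exp 1)]) hGT
                (by positivity) (by norm_num)
          _ = 4 * Real.sqrt F := by ring
      linarith
    -- final algebra with rpow
    set R : ℝ := G / F with hRdef
    have hRpos : 0 < R := by positivity
    have hCR : 1 ≤ C * R := by
      rw [hRdef, mul_div_assoc' C G F, le_div_iff₀ hFp, one_mul]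
      exact hFG
    have hlog : Real.log (1 + R) ≤ (1 + R) ^ (2 * δ) / (2 * δ) := by
      have h := Real.log_le_sub_one_of_pos (Real.rpow_pos_of_pos (show (0:ℝ) < 1 + R by positivity) (2 * δ))
      rw [Real.log_rpow (by positivity)] at h
      rw [le_div_iff₀ (by positivity)]
      nlinarith [Real.rpow_pos_of_pos (show (0:ℝ) < 1 + R by positivity) (2 * δ)]
    have h1R : 1 + R ≤ (1 + C) * R := by nlinarith
    have hpow : (1 + R) ^ (2 * δ) ≤ (1 + C) ^ (2 * δ) * R ^ (2 * δ) := by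
      rw [← Real.mul_rpow (by positivity) hRpos.le]
      exact Real.rpow_le_rpow (by positivity) h1R (by positivity)
    have honeCR : ∀ β : ℝ, 0 ≤ β → 1 ≤ C ^ β * R ^ β := by
      intro β hβ
      rw [← Real.mul_rpow hC.le hRpos.le]
      calc (1:ℝ) = 1 ^ β := (Real.one_rpow β).symm
        _ ≤ (C * R) ^ β := Real.rpow_le_rpow zero_le_one hCR hβ
    have hTK : T ≤ K * R ^ (2 * δ) := by
      have h1 := honeCR (2 * δ) (by positivity)
      have h2 : (1 + R) ^ (2 * δ) / (2 * δ) ≤ (1 + C) ^ (2 * δ) * R ^ (2 * δ) / (2 * δ) := by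
        gcongr
      rw [hTdef, hKdef]
      calc 1 + Real.log (1 + R) ≤
            C ^ (2 * δ) * R ^ (2 * δ) + (1 + C) ^ (2 * δ) * R ^ (2 * δ) / (2 * δ) := by
            linarith
        _ = (C ^ (2 * δ) + (1 + C) ^ (2 * δ) / (2 * δ)) * R ^ (2 * δ) := by ring
    have hsqT : Real.sqrt T ≤ Real.sqrt K * R ^ δ := by
      have h1 : Real.sqrt T ≤ Real.sqrt (K * R ^ (2 * δ)) := Real.sqrt_le_sqrt hTK
      rw [Real.sqrt_mul hKpos.le] at h1
      have h2 : Real.sqrt (R ^ (2 * δ)) = R ^ δ := by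
        rw [Real.sqrt_eq_rpow, ← Real.rpow_mul hRpos.le]
        congr 1
        ring
      rwa [h2] at h1
    have h8 : (8:ℝ) ≤ 8 * (C ^ δ * R ^ δ) := by nlinarith [honeCR δ hδpos.le]
    have hfin : Real.sqrt T * Real.sqrt F + 8 * Real.sqrt F ≤
        (Real.sqrt K + 8 * C ^ δ) * (Real.sqrt F * R ^ δ) := by
      calc Real.sqrt T * Real.sqrt F + 8 * Real.sqrt F ≤
            (Real.sqrt K * R ^ δ) * Real.sqrt F + (8 * (C ^ δ * R ^ δ)) * Real.sqrt F := by
            have k1 := mul_le_mul_of_nonneg_right hsqT hsF.le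
            have k2 := mul_le_mul_of_nonneg_right h8 hsF.le
            linarith
        _ = (Real.sqrt K + 8 * C ^ δ) * (Real.sqrt F * R ^ δ) := by ring
    have hRF : Real.sqrt F * R ^ δ = F ^ ((n:ℝ) / (2 * n + 1)) * G ^ δ := by
      rw [hRdef, Real.div_rpow hG0 hF0, Real.sqrt_eq_rpow]
      rw [show F ^ ((1:ℝ)/2) * (G ^ δ / F ^ δ) = (F ^ ((1:ℝ)/2) / F ^ δ) * G ^ δ by ring]
      rw [← Real.rpow_sub hFp]
      have hexp : (1:ℝ)/2 - δ = (n:ℝ) / (2 * n + 1) := by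
        rw [hδdef]
        have hne : (4 * (n:ℝ) + 2) ≠ 0 := by positivity
        have hne2 : (2 * (n:ℝ) + 1) ≠ 0 := by positivity
        field_simp
        ring
      rw [hexp]
    calc ∫ y in Ioi (0:ℝ), Real.exp (-y) * f y ≤
          Real.sqrt T * Real.sqrt F + 8 * Real.sqrt F := hLHS
      _ ≤ (Real.sqrt K + 8 * C ^ δ) * (Real.sqrt F * R ^ δ) := hfin
      _ = (Real.sqrt K + 8 * C ^ δ) * F ^ ((n:ℝ) / (2 * n + 1)) * G ^ δ := by
          rw [hRF]; ring
end

section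
/- Let B = B(0,1) ⊂ ℝ^d, k > 0, and ψ_∞(R) = (1-|R|²)^k / ∫_B (1-|R|²)^k dR. If g : B → ℝ satisfies ∫_B g ψ_∞ dR = 0 and ∇_R g ∈ L²(ψ_∞ dR), then there is a constant C (depending on d, k) such that ∫_B g² ψ_∞ dR ≤ C ∫_B |∇_R g|² ψ_∞ dR. -/
open MeasureTheory Set Metric ENNReal

noncomputable def fenePsiInf (d : ℕ) (k : ℝ) (R : EuclideanSpace ℝ (Fin d)) : ℝ :=
  (1 - ‖R‖ ^ 2) ^ k /
    ∫ Q in Metric.ball (0 : EuclideanSpace ℝ (Fin d)) 1, (1 - ‖Q‖ ^ 2) ^ k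

section aux
variable {d : ℕ} {k : ℝ}

local notation "E" => EuclideanSpace ℝ (Fin d)
local notation "B" => Metric.ball (0 : EuclideanSpace ℝ (Fin d)) 1

lemma fene_w_meas : Measurable (fun Q : E => (1 - ‖Q‖ ^ 2) ^ k) := by fun_prop

lemma fene_w_nonneg {Q : E} (hQ : Q ∈ B) : 0 ≤ (1 - ‖Q‖ ^ 2) ^ k := by
  apply Real.rpow_nonneg
  have : ‖Q‖ < 1 := by simpa [mem_ball] using hQ
  nlinarith [norm_nonneg Q]

lemma fene_w_le_one (hk : 0 < k) {Q : E} (hQ : Q ∈ B) : (1 - ‖Q‖ ^ 2) ^ k ≤ 1 := by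
  apply Real.rpow_le_one _ _ hk.le
  · have : ‖Q‖ < 1 := by simpa [mem_ball] using hQ
    nlinarith [norm_nonneg Q]
  · nlinarith [sq_nonneg ‖Q‖]

lemma fene_w_intOn (hk : 0 < k) : IntegrableOn (fun Q : E => (1 - ‖Q‖ ^ 2) ^ k) B := by
  apply Measure.integrableOn_of_bounded (M := 1) measure_ball_lt_top.ne
    fene_w_meas.aestronglyMeasurable
  filter_upwards [ae_restrict_mem measurableSet_ball] with Q hQ
  rw [Real.norm_eq_abs, abs_of_nonneg (fene_w_nonneg hQ)]
  exact fene_w_le_one hk hQ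

lemma fene_I_pos (hk : 0 < k) : 0 < ∫ Q in B, (1 - ‖Q‖ ^ 2) ^ k := by
  rw [setIntegral_pos_iff_support_of_nonneg_ae _ (fene_w_intOn hk)]
  · have : B ⊆ Function.support (fun Q : E => (1 - ‖Q‖ ^ 2) ^ k) ∩ B := by
      intro Q hQ
      refine ⟨?_, hQ⟩
      have h1 : ‖Q‖ < 1 := by simpa [mem_ball] using hQ
      have : (0:ℝ) < (1 - ‖Q‖ ^ 2) ^ k := by
        apply Real.rpow_pos_of_pos; nlinarith [norm_nonneg Q]
      simp [Function.mem_support]; positivity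
    calc (0:ℝ≥0∞) < volume B := by
          simpa using (measure_ball_pos volume (0:E) one_pos)
      _ ≤ _ := measure_mono this
  · filter_upwards [ae_restrict_mem measurableSet_ball] with Q hQ using fene_w_nonneg hQ

end aux
section aux2
variable {d : ℕ} {k : ℝ}

local notation "E" => EuclideanSpace ℝ (Fin d)
local notation "B" => Metric.ball (0 : EuclideanSpace ℝ (Fin d)) 1

lemma fenePsi_meas : Measurable (fenePsiInf d k) := by
  unfold fenePsiInf; fun_prop

lemma fenePsi_nonneg (hk : 0 < k) {Q : E} (hQ : Q ∈ B) : 0 ≤ fenePsiInf d k Q :=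
  div_nonneg (fene_w_nonneg hQ) (fene_I_pos hk).le

lemma fenePsi_le (hk : 0 < k) {Q : E} (hQ : Q ∈ B) :
    fenePsiInf d k Q ≤ (∫ Q in B, (1 - ‖Q‖ ^ 2) ^ k)⁻¹ := by
  rw [fenePsiInf, div_eq_mul_inv]
  have := fene_I_pos (d := d) hk
  calc (1 - ‖Q‖ ^ 2) ^ k * (∫ Q in B, (1 - ‖Q‖ ^ 2) ^ k)⁻¹
      ≤ 1 * (∫ Q in B, (1 - ‖Q‖ ^ 2) ^ k)⁻¹ := by
        apply mul_le_mul_of_nonneg_right (fene_w_le_one hk hQ) (by positivity)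
    _ = _ := one_mul _

lemma fenePsi_int_one (hk : 0 < k) : ∫ Q in B, fenePsiInf d k Q = 1 := by
  unfold fenePsiInf
  rw [integral_div]
  exact div_self (fene_I_pos hk).ne'

lemma fenePsi_intOn (hk : 0 < k) : IntegrableOn (fenePsiInf d k) B := by
  unfold fenePsiInf
  exact (fene_w_intOn hk).div_const _

/-- key geometric bound: on the segment the weight dominates the min of endpoints -/
lemma fenePsi_segment (hk : 0 < k) {x y : E} (hx : x ∈ B) (hy : y ∈ B) {t : ℝ}
    (ht : t ∈ Set.Icc (0:ℝ) 1) :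
    fenePsiInf d k x * fenePsiInf d k y ≤
      (∫ Q in B, (1 - ‖Q‖ ^ 2) ^ k)⁻¹ * fenePsiInf d k (y + t • (x - y)) := by
  set z := y + t • (x - y) with hz
  have hnz : ‖z‖ ≤ max ‖x‖ ‖y‖ := by
    have : z = t • x + (1 - t) • y := by
      rw [hz]; module
    rw [this]
    calc ‖t • x + (1 - t) • y‖ ≤ ‖t • x‖ + ‖(1 - t) • y‖ := norm_add_le _ _
      _ = t * ‖x‖ + (1 - t) * ‖y‖ := by
          rw [norm_smul, norm_smul, Real.norm_eq_abs, Real.norm_eq_abs,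
            abs_of_nonneg ht.1, abs_of_nonneg (by linarith [ht.2])]
      _ ≤ t * max ‖x‖ ‖y‖ + (1 - t) * max ‖x‖ ‖y‖ := by
          have h1 := ht.1; have h2 := ht.2
          have := le_max_left ‖x‖ ‖y‖; have := le_max_right ‖x‖ ‖y‖
          nlinarith
      _ = max ‖x‖ ‖y‖ := by ring
  have hzB : z ∈ B := by
    simp only [Metric.mem_ball, dist_zero_right] at *
    exact lt_of_le_of_lt hnz (max_lt hx hy)
  -- min of weights ≤ weight at z
  have hmin : min ((1 - ‖x‖ ^ 2) ^ k) ((1 - ‖y‖ ^ 2) ^ k) ≤ (1 - ‖z‖ ^ 2) ^ k := by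
    rcases max_cases ‖x‖ ‖y‖ with ⟨he, _⟩ | ⟨he, _⟩
    · refine le_trans (min_le_left _ _) ?_
      apply Real.rpow_le_rpow _ _ hk.le
      · have : ‖x‖ < 1 := by simpa using hx
        nlinarith [norm_nonneg x]
      · rw [he] at hnz
        nlinarith [norm_nonneg z, norm_nonneg x]
    · refine le_trans (min_le_right _ _) ?_
      apply Real.rpow_le_rpow _ _ hk.le
      · have : ‖y‖ < 1 := by simpa using hy
        nlinarith [norm_nonneg y]
      · rw [he] at hnz
        nlinarith [norm_nonneg z, norm_nonneg y]
  -- conclude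
  have hI := fene_I_pos (d := d) hk
  have hminpsi : min (fenePsiInf d k x) (fenePsiInf d k y) ≤ fenePsiInf d k z := by
    unfold fenePsiInf
    rw [min_div_div_right hI.le]
    exact div_le_div_of_nonneg_right hmin hI.le
  rcases le_total (fenePsiInf d k x) (fenePsiInf d k y) with hle | hle
  · calc fenePsiInf d k x * fenePsiInf d k y
        ≤ fenePsiInf d k z * (∫ Q in B, (1 - ‖Q‖ ^ 2) ^ k)⁻¹ :=
          mul_le_mul (le_trans (by simp [min_eq_left hle]) hminpsi) (fenePsi_le hk hy)
            (fenePsi_nonneg hk hy) (fenePsi_nonneg hk hzB)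
      _ = _ := mul_comm _ _
  · calc fenePsiInf d k x * fenePsiInf d k y
        = fenePsiInf d k y * fenePsiInf d k x := mul_comm _ _
      _ ≤ fenePsiInf d k z * (∫ Q in B, (1 - ‖Q‖ ^ 2) ^ k)⁻¹ :=
          mul_le_mul (le_trans (by simp [min_eq_right hle]) hminpsi) (fenePsi_le hk hx)
            (fenePsi_nonneg hk hx) (fenePsi_nonneg hk hzB)
      _ = _ := mul_comm _ _

end aux2
section aux3

lemma lintegral_sq_le {α : Type*} [MeasurableSpace α] (μ : Measure α) [IsProbabilityMeasure μ]
    {f : α → ℝ≥0∞} (hf : AEMeasurable f μ) : (∫⁻ a, f a ∂μ) ^ 2 ≤ ∫⁻ a, f a ^ 2 ∂μ := by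
  have hconj : (2:ℝ).HolderConjugate 2 := Real.HolderConjugate.two_two
  have h := ENNReal.lintegral_mul_le_Lp_mul_Lq μ hconj hf
    (aemeasurable_const (b := (1:ℝ≥0∞)))
  simp only [Pi.mul_apply, mul_one, ENNReal.one_rpow, lintegral_const, measure_univ,
    ENNReal.one_rpow, one_mul, ENNReal.rpow_one] at h
  have h2 : (∫⁻ a, f a ∂μ) ^ 2 ≤ ((∫⁻ a, f a ^ (2:ℝ) ∂μ) ^ (1/(2:ℝ))) ^ 2 := by
    exact pow_le_pow_left₀ (zero_le) h 2
  calc (∫⁻ a, f a ∂μ) ^ 2 ≤ ((∫⁻ a, f a ^ (2:ℝ) ∂μ) ^ (1/(2:ℝ))) ^ 2 := h2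
    _ = ∫⁻ a, f a ^ (2:ℝ) ∂μ := by
        rw [← ENNReal.rpow_natCast (((∫⁻ a, f a ^ (2:ℝ) ∂μ) ^ (1/(2:ℝ)))) 2,
          ← ENNReal.rpow_mul]
        norm_num
    _ = ∫⁻ a, f a ^ 2 ∂μ := by
        congr 1; ext a; rw [← ENNReal.rpow_natCast (f a) 2]; norm_num

end aux3
section aux4
variable {d : ℕ}
local notation "E" => EuclideanSpace ℝ (Fin d)

instance : IsProbabilityMeasure (volume.restrict (Set.Ioo (0:ℝ) 1)) :=
  ⟨by simp [Measure.restrict_apply_univ]⟩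

lemma ftc_sq_bound (g : E → ℝ) (hg : Differentiable ℝ g) (x y : E) :
    ENNReal.ofReal ((g x - g y) ^ 2) ≤ ENNReal.ofReal (‖x - y‖ ^ 2) *
      ∫⁻ t in Set.Ioo (0:ℝ) 1, ENNReal.ofReal (‖fderiv ℝ g (y + t • (x - y))‖ ^ 2) := by
  set μ01 := volume.restrict (Set.Ioo (0:ℝ) 1) with hμ01
  set h : ℝ → ℝ := fun t => ‖fderiv ℝ g (y + t • (x - y))‖ with hh
  have haff : Continuous fun t : ℝ => y + t • (x - y) := by continuity
  have hmeas : Measurable h :=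
    ((measurable_fderiv ℝ g).comp haff.measurable).norm
  set J := ∫⁻ t, ENNReal.ofReal (h t ^ 2) ∂μ01 with hJ
  by_cases hJtop : J = ⊤
  · rcases eq_or_ne x y with rfl | hxy
    · simp
    · have h1 : ENNReal.ofReal (‖x - y‖ ^ 2) ≠ 0 := by
        rw [ne_eq, ENNReal.ofReal_eq_zero, not_le]
        have hne : x - y ≠ 0 := sub_ne_zero.mpr hxy
        exact pow_pos (norm_pos_iff.mpr hne) 2
      have : ENNReal.ofReal (‖x - y‖ ^ 2) * J = ⊤ := by
        rw [hJtop, ENNReal.mul_top h1]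
      exact this ▸ le_top
  -- finite case
  · -- CS : (∫⁻ ofReal h)^2 ≤ J
    have hCS : (∫⁻ t, ENNReal.ofReal (h t) ∂μ01) ^ 2 ≤ J := by
      refine le_trans (lintegral_sq_le μ01 (hmeas.ennreal_ofReal.aemeasurable)) ?_
      rw [hJ]
      refine le_of_eq (lintegral_congr fun t => ?_)
      rw [← ENNReal.ofReal_pow (norm_nonneg _)]
    have hfin : (∫⁻ t, ENNReal.ofReal (h t) ∂μ01) ≠ ⊤ := by
      intro htop
      exact hJtop (top_le_iff.mp (le_trans (by rw [htop]; simp) hCS))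
    have hInt : Integrable h μ01 := by
      refine ⟨hmeas.aestronglyMeasurable, ?_⟩
      rw [hasFiniteIntegral_iff_ofReal (ae_of_all _ fun t => norm_nonneg _)]
      exact hfin.lt_top
    -- the derivative along the segment
    set f : ℝ → ℝ := fun t => (fderiv ℝ g (y + t • (x - y))) (x - y) with hf
    have hfmeas : Measurable f :=
      (ContinuousLinearMap.measurable_apply (x - y)).comp
        ((measurable_fderiv ℝ g).comp haff.measurable)
    have hfbound : ∀ t, |f t| ≤ ‖x - y‖ * h t := by
      intro t
      calc |f t| = ‖(fderiv ℝ g (y + t • (x - y))) (x - y)‖ := by rw [Real.norm_eq_abs]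
        _ ≤ ‖fderiv ℝ g (y + t • (x - y))‖ * ‖x - y‖ := ContinuousLinearMap.le_opNorm _ _
        _ = ‖x - y‖ * h t := mul_comm _ _
    have hfInt : Integrable f μ01 := by
      refine Integrable.mono' ((hInt.const_mul ‖x - y‖)) hfmeas.aestronglyMeasurable ?_
      exact ae_of_all _ fun t => by rw [Real.norm_eq_abs]; exact hfbound t
    have hderiv : ∀ t ∈ Set.uIcc (0:ℝ) 1,
        HasDerivAt (fun s => g (y + s • (x - y))) (f t) t := by
      intro t _
      have h1 : HasDerivAt (fun s : ℝ => y + s • (x - y)) (x - y) t := by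
        simpa using ((hasDerivAt_id t).smul_const (x - y)).const_add y
      exact ((hg (y + t • (x - y))).hasFDerivAt).comp_hasDerivAt t h1
    have hIoc : volume.restrict (Set.Ioc (0:ℝ) 1) = μ01 := by
      rw [hμ01]
      exact (Measure.restrict_congr_set Ioo_ae_eq_Ioc).symm
    have hfII : IntervalIntegrable f volume 0 1 := by
      rw [intervalIntegrable_iff_integrableOn_Ioc_of_le zero_le_one]
      rw [IntegrableOn, hIoc]; exact hfInt
    have hFTC : g x - g y = ∫ t in (0:ℝ)..1, f t := by
      have := intervalIntegral.integral_eq_sub_of_hasDerivAt hderiv hfII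
      rw [this]
      try norm_num
    -- |g x - g y| ≤ ‖x-y‖ * ∫ h
    have habs : |g x - g y| ≤ ‖x - y‖ * ∫ t, h t ∂μ01 := by
      rw [hFTC]
      calc |∫ t in (0:ℝ)..1, f t| ≤ ∫ t in (0:ℝ)..1, |f t| :=
            intervalIntegral.abs_integral_le_integral_abs zero_le_one
        _ ≤ ∫ t in (0:ℝ)..1, ‖x - y‖ * h t := by
            apply intervalIntegral.integral_mono_on zero_le_one hfII.abs
            · rw [intervalIntegrable_iff_integrableOn_Ioc_of_le zero_le_one,
                IntegrableOn, hIoc]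
              exact hInt.const_mul _
            · exact fun t _ => hfbound t
        _ = ‖x - y‖ * ∫ t, h t ∂μ01 := by
            rw [intervalIntegral.integral_of_le zero_le_one, ← hIoc]
            rw [MeasureTheory.integral_const_mul]
    -- conclude
    have hsq : (g x - g y) ^ 2 ≤ ‖x - y‖ ^ 2 * (∫ t, h t ∂μ01) ^ 2 := by
      have h0 : 0 ≤ ∫ t, h t ∂μ01 := integral_nonneg fun t => norm_nonneg _
      calc (g x - g y) ^ 2 = |g x - g y| ^ 2 := (sq_abs _).symm
        _ ≤ (‖x - y‖ * ∫ t, h t ∂μ01) ^ 2 := by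
            apply pow_le_pow_left₀ (abs_nonneg _) habs
        _ = _ := mul_pow _ _ _
    calc ENNReal.ofReal ((g x - g y) ^ 2)
        ≤ ENNReal.ofReal (‖x - y‖ ^ 2 * (∫ t, h t ∂μ01) ^ 2) := ENNReal.ofReal_le_ofReal hsq
      _ = ENNReal.ofReal (‖x - y‖ ^ 2) * ENNReal.ofReal ((∫ t, h t ∂μ01) ^ 2) := by
          rw [ENNReal.ofReal_mul (by positivity)]
      _ ≤ ENNReal.ofReal (‖x - y‖ ^ 2) * J := by
          gcongr
          have hint01 : ∫ t, h t ∂μ01 = (∫⁻ t, ENNReal.ofReal (h t) ∂μ01).toReal := by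
            rw [integral_eq_lintegral_of_nonneg_ae (ae_of_all _ fun t => norm_nonneg _)
              hmeas.aestronglyMeasurable]
          rw [hint01, ENNReal.ofReal_pow ENNReal.toReal_nonneg,
            ENNReal.ofReal_toReal hfin]
          exact hCS
      _ = _ := by rw [hJ]

end aux4
section aux5
variable {d : ℕ}
local notation "E" => EuclideanSpace ℝ (Fin d)

lemma lintegral_comp_smul_add (F : E → ℝ≥0∞) (hF : Measurable F) {c : ℝ} (hc : c ≠ 0) (a : E) :
    ∫⁻ x, F (c • x + a) = ENNReal.ofReal |(c ^ d)⁻¹| * ∫⁻ x, F x := by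
  have e : E ≃ᵐ E := (Homeomorph.smul (isUnit_iff_ne_zero.2 hc).unit).toMeasurableEquiv
  have h1 : ∫⁻ x, F (c • x + a) ∂volume =
      ∫⁻ y, F (y + a) ∂(Measure.map (c • ·) volume) := by
    rw [lintegral_map (by exact hF.comp (measurable_add_const a)) (measurable_const_smul c)]
  rw [h1, Measure.map_addHaar_smul volume hc, lintegral_smul_measure,
    lintegral_add_right_eq_self (fun y => F y) a]
  congr 2
  simp [finrank_euclideanSpace]

lemma fene_seg_mem {x y : E} (hx : x ∈ Metric.ball (0:E) 1) (hy : y ∈ Metric.ball (0:E) 1)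
    {t : ℝ} (ht : t ∈ Set.Icc (0:ℝ) 1) : y + t • (x - y) ∈ Metric.ball (0:E) 1 := by
  have hnz : ‖y + t • (x - y)‖ ≤ max ‖x‖ ‖y‖ := by
    have hrw : y + t • (x - y) = t • x + (1 - t) • y := by module
    rw [hrw]
    calc ‖t • x + (1 - t) • y‖ ≤ ‖t • x‖ + ‖(1 - t) • y‖ := norm_add_le _ _
      _ = t * ‖x‖ + (1 - t) * ‖y‖ := by
          rw [norm_smul, norm_smul, Real.norm_eq_abs, Real.norm_eq_abs,
            abs_of_nonneg ht.1, abs_of_nonneg (by linarith [ht.2])]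
      _ ≤ max ‖x‖ ‖y‖ := by
          have h1 := ht.1; have h2 := ht.2
          have := le_max_left ‖x‖ ‖y‖; have := le_max_right ‖x‖ ‖y‖
          nlinarith
  simp only [Metric.mem_ball, dist_zero_right] at *
  exact lt_of_le_of_lt hnz (max_lt hx hy)

end aux5
set_option maxHeartbeats 1000000 in
/-- Weighted Poincaré inequality with the FENE equilibrium weight on the unit ball. -/
theorem stmt_6 (d : ℕ) (hd : 1 ≤ d) (k : ℝ) (hk : 0 < k) :
    ∃ C > 0, ∀ g : EuclideanSpace ℝ (Fin d) → ℝ,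
      Differentiable ℝ g →
      IntegrableOn (fun R => (g R) ^ 2 * fenePsiInf d k R)
        (Metric.ball (0 : EuclideanSpace ℝ (Fin d)) 1) →
      IntegrableOn (fun R => ‖fderiv ℝ g R‖ ^ 2 * fenePsiInf d k R)
        (Metric.ball (0 : EuclideanSpace ℝ (Fin d)) 1) →
      (∫ R in Metric.ball (0 : EuclideanSpace ℝ (Fin d)) 1, g R * fenePsiInf d k R) = 0 →
      (∫ R in Metric.ball (0 : EuclideanSpace ℝ (Fin d)) 1, (g R) ^ 2 * fenePsiInf d k R) ≤
        C * ∫ R in Metric.ball (0 : EuclideanSpace ℝ (Fin d)) 1,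
          ‖fderiv ℝ g R‖ ^ 2 * fenePsiInf d k R := by
  classical
  set B := Metric.ball (0 : EuclideanSpace ℝ (Fin d)) 1 with hB
  set ψ := fenePsiInf d k with hψdef
  set I := ∫ Q in B, (1 - ‖Q‖ ^ 2) ^ k with hIdef
  have hI : 0 < I := fene_I_pos hk
  have hvolpos : 0 < (volume B).toReal :=
    ENNReal.toReal_pos (measure_ball_pos volume _ one_pos).ne' measure_ball_lt_top.ne
  have h2dpos : (0:ℝ) < 2 ^ d := by positivity
  refine ⟨2 * I⁻¹ * 2 ^ d * (volume B).toReal, by positivity, ?_⟩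
  intro g hg hInt1 hInt2 hmean
  set μ := volume.restrict B with hμ
  set μ01 := volume.restrict (Set.Ioo (0:ℝ) 1) with hμ01
  have hgm : Measurable g := hg.continuous.measurable
  have hψm : Measurable ψ := fenePsi_meas
  have ha : Integrable (fun x => g x ^ 2 * ψ x) μ := hInt1
  have hw : Integrable ψ μ := fenePsi_intOn hk
  have hDint : Integrable (fun x => ‖fderiv ℝ g x‖ ^ 2 * ψ x) μ := hInt2
  have haeB : ∀ᵐ x ∂μ, x ∈ B := ae_restrict_mem measurableSet_ball
  have hb : Integrable (fun x => g x * ψ x) μ := by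
    refine Integrable.mono' ((ha.add hw).div_const 2) (hgm.mul hψm).aestronglyMeasurable ?_
    filter_upwards [haeB] with x hx
    have h0 := fenePsi_nonneg hk hx
    rw [Real.norm_eq_abs, abs_mul, abs_of_nonneg h0]
    have hle : |g x| * ψ x ≤ (g x ^ 2 + 1) / 2 * ψ x := by
      nlinarith [sq_nonneg (|g x| - 1), sq_abs (g x), h0]
    calc |g x| * ψ x ≤ (g x ^ 2 + 1) / 2 * ψ x := hle
      _ = (g x ^ 2 * ψ x + ψ x) / 2 := by ring
  set ν := μ.prod μ with hν
  have hprodae : ∀ᵐ p ∂ν, p.1 ∈ B ∧ p.2 ∈ B := by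
    rw [hν, hμ, Measure.prod_restrict]
    filter_upwards [ae_restrict_mem (measurableSet_ball.prod measurableSet_ball)] with p hp
    exact hp
  set P : EuclideanSpace ℝ (Fin d) × EuclideanSpace ℝ (Fin d) → ℝ :=
    fun p => (g p.1 - g p.2) ^ 2 * (ψ p.1 * ψ p.2) with hP
  have hPmeas : Measurable P :=
    (((hgm.comp measurable_fst).sub (hgm.comp measurable_snd)).pow_const 2).mul
      ((hψm.comp measurable_fst).mul (hψm.comp measurable_snd))
  have hPexp : P = fun p => g p.1 ^ 2 * ψ p.1 * ψ p.2 + ψ p.1 * (g p.2 ^ 2 * ψ p.2)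
      - 2 * (g p.1 * ψ p.1 * (g p.2 * ψ p.2)) := by
    funext p; simp only [hP]; ring
  have hmean' : ∫ x, g x * ψ x ∂μ = 0 := hmean
  have hone : ∫ x, ψ x ∂μ = 1 := fenePsi_int_one hk
  have hPval : ∫ p, P p ∂ν = 2 * ∫ x, g x ^ 2 * ψ x ∂μ := by
    have hrw : ∫ p, P p ∂ν = ∫ p : EuclideanSpace ℝ (Fin d) × EuclideanSpace ℝ (Fin d),
        (g p.1 ^ 2 * ψ p.1 * ψ p.2 + ψ p.1 * (g p.2 ^ 2 * ψ p.2)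
          - 2 * (g p.1 * ψ p.1 * (g p.2 * ψ p.2))) ∂ν := by
      refine integral_congr_ae (ae_of_all _ fun p => ?_)
      simp only [hP]; ring
    have hAB : Integrable (fun p : EuclideanSpace ℝ (Fin d) × EuclideanSpace ℝ (Fin d) =>
        g p.1 ^ 2 * ψ p.1 * ψ p.2 + ψ p.1 * (g p.2 ^ 2 * ψ p.2)) ν :=
      (ha.mul_prod hw).add (hw.mul_prod ha)
    have hC : Integrable (fun p : EuclideanSpace ℝ (Fin d) × EuclideanSpace ℝ (Fin d) =>
        2 * (g p.1 * ψ p.1 * (g p.2 * ψ p.2))) ν := (hb.mul_prod hb).const_mul 2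
    have hA : Integrable (fun p : EuclideanSpace ℝ (Fin d) × EuclideanSpace ℝ (Fin d) =>
        g p.1 ^ 2 * ψ p.1 * ψ p.2) ν := ha.mul_prod hw
    have hBB : Integrable (fun p : EuclideanSpace ℝ (Fin d) × EuclideanSpace ℝ (Fin d) =>
        ψ p.1 * (g p.2 ^ 2 * ψ p.2)) ν := hw.mul_prod ha
    rw [hrw, integral_sub hAB hC, integral_add hA hBB]
    have e1 : ∫ p : EuclideanSpace ℝ (Fin d) × EuclideanSpace ℝ (Fin d),
        g p.1 ^ 2 * ψ p.1 * ψ p.2 ∂ν = (∫ x, g x ^ 2 * ψ x ∂μ) * ∫ x, ψ x ∂μ :=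
      integral_prod_mul (fun x => g x ^ 2 * ψ x) ψ
    have e2 : ∫ p : EuclideanSpace ℝ (Fin d) × EuclideanSpace ℝ (Fin d),
        ψ p.1 * (g p.2 ^ 2 * ψ p.2) ∂ν = (∫ x, ψ x ∂μ) * ∫ x, g x ^ 2 * ψ x ∂μ :=
      integral_prod_mul ψ (fun x => g x ^ 2 * ψ x)
    have e3 : ∫ p : EuclideanSpace ℝ (Fin d) × EuclideanSpace ℝ (Fin d),
        2 * (g p.1 * ψ p.1 * (g p.2 * ψ p.2)) ∂ν
        = 2 * ((∫ x, g x * ψ x ∂μ) * ∫ x, g x * ψ x ∂μ) := by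
      rw [integral_const_mul]
      congr 1
      exact integral_prod_mul (fun x => g x * ψ x) (fun x => g x * ψ x)
    rw [e1, e2, e3, hmean', hone]
    ring
  have hPnn : 0 ≤ᵐ[ν] P := by
    filter_upwards [hprodae] with p hp
    exact mul_nonneg (sq_nonneg _)
      (mul_nonneg (fenePsi_nonneg hk hp.1) (fenePsi_nonneg hk hp.2))
  have hPl : ∫ p, P p ∂ν = (∫⁻ p, ENNReal.ofReal (P p) ∂ν).toReal :=
    integral_eq_lintegral_of_nonneg_ae hPnn hPmeas.aestronglyMeasurable
  set Φ : EuclideanSpace ℝ (Fin d) → ℝ≥0∞ :=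
    fun z => ENNReal.ofReal (‖fderiv ℝ g z‖ ^ 2 * ψ z) with hΦ
  have hΦmeas : Measurable Φ :=
    (((measurable_fderiv ℝ g).norm.pow_const 2).mul hψm).ennreal_ofReal
  set Φ' := B.indicator Φ with hΦ'
  have hΦ'meas : Measurable Φ' := hΦmeas.indicator measurableSet_ball
  set G : ℝ≥0∞ := ∫⁻ z, Φ' z with hG
  have hGeq : G = ∫⁻ z, Φ z ∂μ := by
    rw [hG, hΦ']
    exact lintegral_indicator measurableSet_ball Φ
  have hGfin : G ≠ ⊤ := by
    rw [hGeq]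
    have hle : (∫⁻ z, Φ z ∂μ) ≤ ∫⁻ z, (‖‖fderiv ℝ g z‖ ^ 2 * ψ z‖₊ : ℝ≥0∞) ∂μ := by
      refine lintegral_mono fun z => ?_
      rw [hΦ, ← enorm_eq_nnnorm, ← ofReal_norm, Real.norm_eq_abs]
      exact ENNReal.ofReal_le_ofReal (le_abs_self _)
    exact (lt_of_le_of_lt hle hDint.2).ne
  -- pointwise key bound
  have hkey : ∀ x ∈ B, ∀ y ∈ B, ENNReal.ofReal (P (x, y)) ≤
      ENNReal.ofReal (4 * I⁻¹) * ∫⁻ t, Φ' (y + t • (x - y)) ∂μ01 := by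
    intro x hx y hy
    have e1 : ENNReal.ofReal (P (x, y)) =
        ENNReal.ofReal ((g x - g y) ^ 2) * ENNReal.ofReal (ψ x * ψ y) := by
      rw [hP]; exact ENNReal.ofReal_mul (sq_nonneg _)
    rw [e1]
    have e2 := ftc_sq_bound g hg x y
    have hxy4 : ENNReal.ofReal (‖x - y‖ ^ 2) ≤ ENNReal.ofReal 4 := by
      apply ENNReal.ofReal_le_ofReal
      have h1 : ‖x‖ < 1 := by have := hx; rw [hB] at this; simpa using this
      have h2 : ‖y‖ < 1 := by have := hy; rw [hB] at this; simpa using this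
      have h3 := norm_sub_le x y
      nlinarith [norm_nonneg (x - y)]
    calc ENNReal.ofReal ((g x - g y) ^ 2) * ENNReal.ofReal (ψ x * ψ y)
        ≤ (ENNReal.ofReal 4 *
            ∫⁻ t, ENNReal.ofReal (‖fderiv ℝ g (y + t • (x - y))‖ ^ 2) ∂μ01) *
            ENNReal.ofReal (ψ x * ψ y) :=
          mul_le_mul_left (le_trans e2 (mul_le_mul_left hxy4 _)) _
      _ = ENNReal.ofReal 4 * ∫⁻ t, ENNReal.ofReal (‖fderiv ℝ g (y + t • (x - y))‖ ^ 2) *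
            ENNReal.ofReal (ψ x * ψ y) ∂μ01 := by
          rw [mul_assoc, lintegral_mul_const' _ _ ENNReal.ofReal_ne_top]
      _ ≤ ENNReal.ofReal 4 * ∫⁻ t, ENNReal.ofReal I⁻¹ * Φ' (y + t • (x - y)) ∂μ01 := by
          apply mul_le_mul_right
          refine lintegral_mono_ae ?_
          filter_upwards [ae_restrict_mem measurableSet_Ioo] with t ht
          have htI : t ∈ Set.Icc (0:ℝ) 1 := ⟨ht.1.le, ht.2.le⟩
          have hzB := fene_seg_mem hx hy htI
          have hseg := fenePsi_segment hk hx hy htI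
          rw [← hIdef] at hseg
          have hn2 : (0:ℝ) ≤ ‖fderiv ℝ g (y + t • (x - y))‖ ^ 2 := sq_nonneg _
          calc ENNReal.ofReal (‖fderiv ℝ g (y + t • (x - y))‖ ^ 2) *
                ENNReal.ofReal (ψ x * ψ y)
              = ENNReal.ofReal (‖fderiv ℝ g (y + t • (x - y))‖ ^ 2 * (ψ x * ψ y)) :=
                (ENNReal.ofReal_mul hn2).symm
            _ ≤ ENNReal.ofReal (I⁻¹ *
                  (‖fderiv ℝ g (y + t • (x - y))‖ ^ 2 * ψ (y + t • (x - y)))) := by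
                apply ENNReal.ofReal_le_ofReal
                calc ‖fderiv ℝ g (y + t • (x - y))‖ ^ 2 * (ψ x * ψ y)
                    ≤ ‖fderiv ℝ g (y + t • (x - y))‖ ^ 2 * (I⁻¹ * ψ (y + t • (x - y))) :=
                      mul_le_mul_of_nonneg_left hseg hn2
                  _ = I⁻¹ * (‖fderiv ℝ g (y + t • (x - y))‖ ^ 2 * ψ (y + t • (x - y))) := by
                      ring
            _ = ENNReal.ofReal I⁻¹ * Φ (y + t • (x - y)) := by
                rw [ENNReal.ofReal_mul (inv_nonneg.2 hI.le), hΦ]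
            _ = ENNReal.ofReal I⁻¹ * Φ' (y + t • (x - y)) := by
                rw [hΦ', Set.indicator_of_mem hzB]
      _ = ENNReal.ofReal 4 * (ENNReal.ofReal I⁻¹ * ∫⁻ t, Φ' (y + t • (x - y)) ∂μ01) := by
          rw [lintegral_const_mul' _ _ ENNReal.ofReal_ne_top]
      _ = ENNReal.ofReal (4 * I⁻¹) * ∫⁻ t, Φ' (y + t • (x - y)) ∂μ01 := by
          rw [ENNReal.ofReal_mul (by norm_num), mul_assoc]
  -- change of variables bound
  have hsub : ∀ (c : ℝ) (a : EuclideanSpace ℝ (Fin d)), c ≠ 0 → 2⁻¹ ≤ c →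
      (∫⁻ z, Φ' (c • z + a) ∂μ) ≤ ENNReal.ofReal (2 ^ d) * G := by
    intro c a hc hc2
    have hc0 : (0:ℝ) < c := lt_of_lt_of_le (by norm_num) hc2
    calc (∫⁻ z, Φ' (c • z + a) ∂μ) ≤ ∫⁻ z, Φ' (c • z + a) := by
          rw [hμ]; exact setLIntegral_le_lintegral _ _
      _ = ENNReal.ofReal |(c ^ d)⁻¹| * G := by
          rw [lintegral_comp_smul_add Φ' hΦ'meas hc a, hG]
      _ ≤ ENNReal.ofReal (2 ^ d) * G := by
          apply mul_le_mul_left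
          apply ENNReal.ofReal_le_ofReal
          rw [abs_of_nonneg (by positivity)]
          have hp : ((2:ℝ)⁻¹) ^ d ≤ c ^ d := pow_le_pow_left₀ (by norm_num) hc2 d
          calc (c ^ d)⁻¹ ≤ (((2:ℝ)⁻¹) ^ d)⁻¹ := by
                apply inv_anti₀ (by positivity) hp
            _ = 2 ^ d := by rw [← inv_pow, inv_inv]
  -- per-t bound
  have hmeas3 : ∀ t : ℝ, Measurable fun p : EuclideanSpace ℝ (Fin d) × EuclideanSpace ℝ (Fin d)
      => Φ' (p.2 + t • (p.1 - p.2)) := by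
    intro t
    exact hΦ'meas.comp
      (continuous_snd.add ((continuous_fst.sub continuous_snd).const_smul t)).measurable
  have hpert : ∀ t ∈ Set.Ioo (0:ℝ) 1,
      (∫⁻ x, ∫⁻ y, Φ' (y + t • (x - y)) ∂μ ∂μ) ≤ ENNReal.ofReal (2 ^ d) * G * volume B := by
    intro t ht
    rcases le_or_gt t 2⁻¹ with htc | htc
    · have h1t : (1:ℝ) - t ≠ 0 := by nlinarith [ht.2]
      have h1t2 : (2:ℝ)⁻¹ ≤ 1 - t := by linarith
      have hinner : ∀ x, (∫⁻ y, Φ' (y + t • (x - y)) ∂μ) ≤ ENNReal.ofReal (2 ^ d) * G := by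
        intro x
        have hrw : (fun y => Φ' (y + t • (x - y))) = fun y => Φ' ((1 - t) • y + t • x) := by
          funext y; congr 1; module
        rw [hrw]
        exact hsub (1 - t) (t • x) h1t h1t2
      calc (∫⁻ x, ∫⁻ y, Φ' (y + t • (x - y)) ∂μ ∂μ)
          ≤ ∫⁻ _x, ENNReal.ofReal (2 ^ d) * G ∂μ := lintegral_mono hinner
        _ = ENNReal.ofReal (2 ^ d) * G * volume B := by
            rw [lintegral_const, hμ, Measure.restrict_apply_univ]
    · have ht0 : t ≠ 0 := ne_of_gt ht.1
      have hswap : (∫⁻ x, ∫⁻ y, Φ' (y + t • (x - y)) ∂μ ∂μ)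
          = ∫⁻ y, ∫⁻ x, Φ' (y + t • (x - y)) ∂μ ∂μ := by
        apply lintegral_lintegral_swap
        exact (hmeas3 t).aemeasurable
      rw [hswap]
      have hinner : ∀ y, (∫⁻ x, Φ' (y + t • (x - y)) ∂μ) ≤ ENNReal.ofReal (2 ^ d) * G := by
        intro y
        have hrw : (fun x => Φ' (y + t • (x - y))) = fun x => Φ' (t • x + (y - t • y)) := by
          funext x; congr 1; module
        rw [hrw]
        exact hsub t (y - t • y) ht0 htc.le
      calc (∫⁻ y, ∫⁻ x, Φ' (y + t • (x - y)) ∂μ ∂μ)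
          ≤ ∫⁻ _y, ENNReal.ofReal (2 ^ d) * G ∂μ := lintegral_mono hinner
        _ = ENNReal.ofReal (2 ^ d) * G * volume B := by
            rw [lintegral_const, hμ, Measure.restrict_apply_univ]
  -- main lintegral bound
  have hmain : (∫⁻ p, ENNReal.ofReal (P p) ∂ν) ≤
      ENNReal.ofReal (4 * I⁻¹) * (ENNReal.ofReal (2 ^ d) * G * volume B) := by
    rw [hν, lintegral_prod _ hPmeas.ennreal_ofReal.aemeasurable]
    calc (∫⁻ x, ∫⁻ y, ENNReal.ofReal (P (x, y)) ∂μ ∂μ)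
        ≤ ∫⁻ x, ∫⁻ y, ENNReal.ofReal (4 * I⁻¹) * ∫⁻ t, Φ' (y + t • (x - y)) ∂μ01 ∂μ ∂μ := by
          refine lintegral_mono_ae ?_
          filter_upwards [haeB] with x hx
          refine lintegral_mono_ae ?_
          filter_upwards [haeB] with y hy
          exact hkey x hx y hy
      _ = ENNReal.ofReal (4 * I⁻¹) *
            ∫⁻ x, ∫⁻ y, ∫⁻ t, Φ' (y + t • (x - y)) ∂μ01 ∂μ ∂μ := by
          simp_rw [lintegral_const_mul' (ENNReal.ofReal (4 * I⁻¹)) _ ENNReal.ofReal_ne_top]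
      _ = ENNReal.ofReal (4 * I⁻¹) *
            ∫⁻ t, ∫⁻ x, ∫⁻ y, Φ' (y + t • (x - y)) ∂μ ∂μ ∂μ01 := by
          congr 1
          have step1 : (∫⁻ x, ∫⁻ y, ∫⁻ t, Φ' (y + t • (x - y)) ∂μ01 ∂μ ∂μ)
              = ∫⁻ x, ∫⁻ t, ∫⁻ y, Φ' (y + t • (x - y)) ∂μ ∂μ01 ∂μ := by
            refine lintegral_congr fun x => ?_
            apply lintegral_lintegral_swap
            refine Measurable.aemeasurable ?_
            exact hΦ'meas.comp (continuous_fst.add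
              (continuous_snd.smul (continuous_const.sub continuous_fst))).measurable
          rw [step1]
          apply lintegral_lintegral_swap
          refine Measurable.aemeasurable ?_
          refine Measurable.lintegral_prod_right (ν := μ) ?_
          exact hΦ'meas.comp (continuous_snd.add
            ((continuous_fst.snd).smul (continuous_fst.fst.sub continuous_snd))).measurable
      _ ≤ ENNReal.ofReal (4 * I⁻¹) * ∫⁻ _t, ENNReal.ofReal (2 ^ d) * G * volume B ∂μ01 := by
          apply mul_le_mul_right
          refine lintegral_mono_ae ?_
          filter_upwards [ae_restrict_mem measurableSet_Ioo] with t ht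
          exact hpert t ht
      _ = ENNReal.ofReal (4 * I⁻¹) * (ENNReal.ofReal (2 ^ d) * G * volume B) := by
          rw [lintegral_const, measure_univ, mul_one]
  -- finiteness and conversion
  have hKfin : ENNReal.ofReal (4 * I⁻¹) * (ENNReal.ofReal (2 ^ d) * G * volume B) ≠ ⊤ :=
    ENNReal.mul_ne_top ENNReal.ofReal_ne_top
      (ENNReal.mul_ne_top (ENNReal.mul_ne_top ENNReal.ofReal_ne_top hGfin)
        measure_ball_lt_top.ne)
  have h2int : 2 * ∫ x, g x ^ 2 * ψ x ∂μ ≤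
      (ENNReal.ofReal (4 * I⁻¹) * (ENNReal.ofReal (2 ^ d) * G * volume B)).toReal := by
    rw [← hPval, hPl]
    exact ENNReal.toReal_mono hKfin hmain
  have hDnn : 0 ≤ᵐ[μ] fun x => ‖fderiv ℝ g x‖ ^ 2 * ψ x := by
    filter_upwards [haeB] with x hx
    exact mul_nonneg (sq_nonneg _) (fenePsi_nonneg hk hx)
  have hGtoReal : G.toReal = ∫ x, ‖fderiv ℝ g x‖ ^ 2 * ψ x ∂μ := by
    rw [hGeq, integral_eq_lintegral_of_nonneg_ae hDnn
      (((measurable_fderiv ℝ g).norm.pow_const 2).mul hψm).aestronglyMeasurable]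
    try simp only [hΦ]
  have hDnonneg : 0 ≤ ∫ x, ‖fderiv ℝ g x‖ ^ 2 * ψ x ∂μ := integral_nonneg_of_ae hDnn
  have hKval : (ENNReal.ofReal (4 * I⁻¹) * (ENNReal.ofReal (2 ^ d) * G * volume B)).toReal
      = 4 * I⁻¹ * (2 ^ d * (∫ x, ‖fderiv ℝ g x‖ ^ 2 * ψ x ∂μ) * (volume B).toReal) := by
    rw [ENNReal.toReal_mul, ENNReal.toReal_mul, ENNReal.toReal_mul,
      ENNReal.toReal_ofReal (by positivity), ENNReal.toReal_ofReal (by positivity), hGtoReal]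
  rw [hKval] at h2int
  have hfinal : (2 * I⁻¹ * 2 ^ d * (volume B).toReal) *
      (∫ x, ‖fderiv ℝ g x‖ ^ 2 * ψ x ∂μ) =
      (1 / 2) * (4 * I⁻¹ * (2 ^ d * (∫ x, ‖fderiv ℝ g x‖ ^ 2 * ψ x ∂μ) *
        (volume B).toReal)) := by ring
  calc (∫ x, g x ^ 2 * ψ x ∂μ)
      ≤ (1 / 2) * (4 * I⁻¹ * (2 ^ d * (∫ x, ‖fderiv ℝ g x‖ ^ 2 * ψ x ∂μ) *
          (volume B).toReal)) := by linarith
    _ = (2 * I⁻¹ * 2 ^ d * (volume B).toReal) * (∫ x, ‖fderiv ℝ g x‖ ^ 2 * ψ x ∂μ) :=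
        hfinal.symm
end
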